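/- Let K be a closed cone with nonempty interior in a finite dimensional real normed space. If 𝒜 is a bounded, primitive family of continuous, order-preserving, homogeneous maps on K with generalized spectral radius r(𝒜) = 1, then the semigroup 𝒜⁺ is bounded. -/

import Mathlib

open Filter Topology Set

noncomputable section

/-- A wedge in a real normed space: a convex set closed under positive scalar multiplication. -/
def IsWedge {X : Type*} [NormedAddCommGroup X] [NormedSpace ℝ X] (W : Set X) : Prop :=
  Convex ℝ W ∧ ∀ c : ℝ, 0 < c → ∀ x ∈ W, c • x ∈ W

/-- A closed cone: closed, convex, closed under positive scalar multiplication, K ∩ (−K) = {0}. -/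
def IsClosedCone {X : Type*} [NormedAddCommGroup X] [NormedSpace ℝ X] (K : Set X) : Prop :=
  IsClosed K ∧ Convex ℝ K ∧ (∀ c : ℝ, 0 < c → ∀ x ∈ K, c • x ∈ K) ∧ K ∩ (-K) = {0}

/-- A polyhedral cone: intersection of finitely many closed halfspaces through the origin. -/
def IsPolyhedralCone {X : Type*} [NormedAddCommGroup X] [NormedSpace ℝ X] (K : Set X) : Prop :=
  ∃ (k : ℕ) (φ : Fin k → (X →ₗ[ℝ] ℝ)), K = {x | ∀ i, 0 ≤ φ i x}

/-- `f` maps `W` into itself and is positively homogeneous on `W`. -/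
def HomogOn {X : Type*} [NormedAddCommGroup X] [NormedSpace ℝ X] (f : X → X) (W : Set X) : Prop :=
  Set.MapsTo f W W ∧ ∀ c : ℝ, 0 < c → ∀ x ∈ W, f (c • x) = c • f x

/-- `f` is order-preserving with respect to the order induced by the cone `K`. -/
def OrderPresOn {X : Type*} [NormedAddCommGroup X] [NormedSpace ℝ X] (f : X → X) (K : Set X) : Prop :=
  ∀ x ∈ K, ∀ y ∈ K, y - x ∈ K → f y - f x ∈ K

/-- `f` is subadditive on `K`: f(x+y) ≤ f(x)+f(y) in the cone order. -/
def SubaddOn {X : Type*} [NormedAddCommGroup X] [NormedSpace ℝ X] (f : X → X) (K : Set X) : Prop :=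
  ∀ x ∈ K, ∀ y ∈ K, (f x + f y) - f (x + y) ∈ K

/-- The norm of a homogeneous map on `W`: sup of ‖f x‖ over unit vectors of `W`. -/
def opNormW {X : Type*} [NormedAddCommGroup X] (f : X → X) (W : Set X) : ℝ :=
  sSup ((fun x => ‖f x‖) '' {x ∈ W | ‖x‖ = 1})

/-- A bounded homogeneous map on `W`. -/
def BoundedMapOn {X : Type*} [NormedAddCommGroup X] (f : X → X) (W : Set X) : Prop :=
  ∃ C : ℝ, ∀ x ∈ W, ‖f x‖ ≤ C * ‖x‖

/-- A bounded family of homogeneous maps on `W`. -/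
def BoundedFamOn {X : Type*} [NormedAddCommGroup X] (A : Set (X → X)) (W : Set X) : Prop :=
  ∃ C : ℝ, ∀ f ∈ A, ∀ x ∈ W, ‖f x‖ ≤ C * ‖x‖

/-- `famPow A m` = 𝒜^m, the set of m-fold compositions of maps from `A` (with 𝒜^0 = {id}). -/
def famPow {X : Type*} (A : Set (X → X)) : ℕ → Set (X → X)
  | 0 => {id}
  | m + 1 => {h | ∃ f ∈ A, ∃ g ∈ famPow A m, h = f ∘ g}

/-- The composition of two families of maps. -/
def compFam {X : Type*} (A B : Set (X → X)) : Set (X → X) :=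
  {h | ∃ f ∈ A, ∃ g ∈ B, h = f ∘ g}

/-- The Bonsall cone spectral radius r(f) = inf_{n>0} ‖f^n‖^{1/n}. -/
def coneSpecRad {X : Type*} [NormedAddCommGroup X] (f : X → X) (W : Set X) : ℝ :=
  ⨅ n : ℕ+, (opNormW (f^[(n : ℕ)]) W) ^ (((n : ℕ) : ℝ)⁻¹)

/-- sup_{f ∈ 𝒜^m} ‖f‖^{1/m}. -/
def jointTerm {X : Type*} [NormedAddCommGroup X] (A : Set (X → X)) (W : Set X) (m : ℕ) : ℝ :=
  sSup ((fun f => (opNormW f W) ^ ((m : ℝ)⁻¹)) '' famPow A m)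

/-- sup_{f ∈ 𝒜^m} r(f)^{1/m}. -/
def genTerm {X : Type*} [NormedAddCommGroup X] (A : Set (X → X)) (W : Set X) (m : ℕ) : ℝ :=
  sSup ((fun f => (coneSpecRad f W) ^ ((m : ℝ)⁻¹)) '' famPow A m)

/-- The joint spectral radius r̂(𝒜) = inf_{m>0} sup_{f ∈ 𝒜^m} ‖f‖^{1/m}. -/
def jointRad {X : Type*} [NormedAddCommGroup X] (A : Set (X → X)) (W : Set X) : ℝ :=
  ⨅ m : ℕ+, jointTerm A W (m : ℕ)

/-- The generalized spectral radius r(𝒜) = sup_{m>0} sup_{f ∈ 𝒜^m} r(f)^{1/m}. -/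
def genRad {X : Type*} [NormedAddCommGroup X] (A : Set (X → X)) (W : Set X) : ℝ :=
  ⨆ m : ℕ+, genTerm A W (m : ℕ)

/-- β_m = inf_{f ∈ 𝒜^m} ‖f‖. -/
def subBeta {X : Type*} [NormedAddCommGroup X] (A : Set (X → X)) (W : Set X) (m : ℕ) : ℝ :=
  sInf ((fun f => opNormW f W) '' famPow A m)

/-- γ_m = inf_{f ∈ 𝒜^m} r(f). -/
def subGamma {X : Type*} [NormedAddCommGroup X] (A : Set (X → X)) (W : Set X) (m : ℕ) : ℝ :=
  sInf ((fun f => coneSpecRad f W) '' famPow A m)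

/-- F_m^d = f_m ∘ ⋯ ∘ f_1 for a sequence d of maps. -/
def seqComp {X : Type*} (d : ℕ → X → X) : ℕ → X → X
  | 0 => id
  | m + 1 => d m ∘ seqComp d m

/-- The standard cone ℝⁿ_{≥0}. -/
def stdCone (n : ℕ) : Set (Fin n → ℝ) := {x | ∀ i, 0 ≤ x i}

/-- The closed face F_J of the standard cone. -/
def stdFace {n : ℕ} (J : Set (Fin n)) : Set (Fin n → ℝ) :=
  {x | (∀ i, 0 ≤ x i) ∧ ∀ i ∉ J, x i = 0}

/-- A family of maps on ℝⁿ_{≥0} is irreducible if no non-trivial closed face is invariant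
under every member of the family. -/
def IrreducibleFam {n : ℕ} (A : Set ((Fin n → ℝ) → Fin n → ℝ)) : Prop :=
  ¬ ∃ J : Set (Fin n), J.Nonempty ∧ J ≠ Set.univ ∧ ∀ f ∈ A, Set.MapsTo f (stdFace J) (stdFace J)

/-! Fix `u ≫ 0`. Primitivity and compactness of the unit sphere of `K` give `ε > 0` such that
every nonzero `x ∈ K` has some `f ∈ 𝒜⁺` with `f x ≥ ε ‖x‖ u`. If some `g ∈ 𝒜⁺` had
`‖g u‖ > ε⁻¹`, then `(f ∘ g) u ≥ c u` with `c > 1` for a suitable `f`; iterating, the normality of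
`K` turns this into `r((f ∘ g)^j) > 1` for large `j`, contradicting `r(𝒜) = 1`. So `‖g u‖ ≤ ε⁻¹`
on `𝒜⁺`, and as every unit vector `x ∈ K` satisfies `x ≤ R u`, monotonicity and normality bound
`‖g‖` uniformly. -/

section

variable {X : Type*} {A : Set (X → X)}

def famPlus (A : Set (X → X)) : Set (X → X) :=
  {f | ∃ m, 0 < m ∧ f ∈ famPow A m}

section Semigroup

variable {f g : X → X}

theorem famPow_comp {a b : ℕ} (hf : f ∈ famPow A a) (hg : g ∈ famPow A b) :
    f ∘ g ∈ famPow A (a + b) := by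
  induction a generalizing f with
  | zero =>
    obtain rfl : f = id := hf
    simpa using hg
  | succ a ih =>
    obtain ⟨f₁, hf₁, f₂, hf₂, rfl⟩ := hf
    rw [Nat.add_right_comm]
    exact ⟨f₁, hf₁, f₂ ∘ g, ih hf₂, rfl⟩

theorem famPow_iterate {k : ℕ} (hf : f ∈ famPow A k) (n : ℕ) : f^[n] ∈ famPow A (n * k) := by
  induction n with
  | zero => simp [famPow]
  | succ n ih =>
    rw [Function.iterate_succ', Nat.succ_mul, Nat.add_comm]
    exact famPow_comp hf ih

theorem comp_mem_famPlus (hf : f ∈ famPlus A) (hg : g ∈ famPlus A) : f ∘ g ∈ famPlus A := by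
  obtain ⟨a, ha, hf⟩ := hf
  obtain ⟨b, -, hg⟩ := hg
  exact ⟨a + b, by omega, famPow_comp hf hg⟩

end Semigroup

variable [NormedAddCommGroup X]

section SpectralRadius

variable {f : X → X} {W : Set X}

theorem opNormW_nonneg (f : X → X) (W : Set X) : 0 ≤ opNormW f W :=
  Real.sSup_nonneg (by rintro _ ⟨y, -, rfl⟩; exact norm_nonneg _)

theorem coneSpecRad_nonneg (f : X → X) (W : Set X) : 0 ≤ coneSpecRad f W :=
  Real.iInf_nonneg fun _ => Real.rpow_nonneg (opNormW_nonneg _ _) _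

theorem coneSpecRad_le {B : ℝ} (hB : 0 ≤ B) (h : ∀ x ∈ W, ‖f x‖ ≤ B * ‖x‖) :
    coneSpecRad f W ≤ B := by
  have hbdd : BddBelow (Set.range fun n : ℕ+ => opNormW (f^[n]) W ^ ((n : ℝ)⁻¹)) :=
    ⟨0, by rintro _ ⟨n, rfl⟩; exact Real.rpow_nonneg (opNormW_nonneg _ _) _⟩
  calc coneSpecRad f W ≤ opNormW f W := (ciInf_le hbdd 1).trans_eq (by simp)
    _ ≤ B := Real.sSup_le (by rintro _ ⟨x, ⟨hx, hx1⟩, rfl⟩; simpa [hx1] using h x hx) hB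

theorem le_coneSpecRad {b : ℝ} (hb : 0 ≤ b) (h : ∀ n : ℕ, 0 < n → b ^ n ≤ opNormW (f^[n]) W) :
    b ≤ coneSpecRad f W := by
  refine le_ciInf fun n => ?_
  calc b = (b ^ (n : ℕ)) ^ ((n : ℝ)⁻¹) := (Real.pow_rpow_inv_natCast hb n.ne_zero).symm
    _ ≤ opNormW (f^[n]) W ^ ((n : ℝ)⁻¹) := by gcongr; exact h n n.pos

end SpectralRadius

variable [NormedSpace ℝ X] {K : Set X}

theorem IsClosed.isCompact_unitSphere [FiniteDimensional ℝ X] (hK : IsClosed K) :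
    IsCompact {x ∈ K | ‖x‖ = 1} := by
  convert (isCompact_sphere (0 : X) 1).inter_left hK using 1
  ext x
  simp

namespace IsClosedCone

theorem zero_mem (hK : IsClosedCone K) : (0 : X) ∈ K := by
  have h : (0 : X) ∈ K ∩ -K := hK.2.2.2 ▸ Set.mem_singleton 0
  exact h.1

theorem smul_mem (hK : IsClosedCone K) {c : ℝ} (hc : 0 ≤ c) {x : X} (hx : x ∈ K) : c • x ∈ K := by
  rcases hc.eq_or_lt with rfl | hc
  · rw [zero_smul]
    exact hK.zero_mem
  · exact hK.2.2.1 c hc x hx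

theorem add_mem (hK : IsClosedCone K) {x y : X} (hx : x ∈ K) (hy : y ∈ K) : x + y ∈ K := by
  have hmid : (1 / 2 : ℝ) • x + (1 / 2 : ℝ) • y ∈ K :=
    hK.2.1 hx hy (by norm_num) (by norm_num) (by norm_num)
  convert hK.smul_mem zero_le_two hmid using 1
  rw [smul_add, smul_smul, smul_smul]
  norm_num

theorem eq_zero_of_neg_mem (hK : IsClosedCone K) {x : X} (hx : x ∈ K) (hx' : -x ∈ K) : x = 0 := by
  have h : x ∈ K ∩ -K := ⟨hx, hx'⟩
  rwa [hK.2.2.2] at h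

theorem sub_smul_mem_of_le (hK : IsClosedCone K) {u v : X} (hu : u ∈ K) {ε δ : ℝ}
    (hv : v - ε • u ∈ K) (hδ : δ ≤ ε) : v - δ • u ∈ K := by
  convert hK.add_mem hv (hK.smul_mem (sub_nonneg.2 hδ) hu) using 1
  rw [sub_smul]
  abel

/-- Normality of `K`. -/
theorem exists_norm_le_mul_norm [FiniteDimensional ℝ X] (hK : IsClosedCone K) :
    ∃ N, 1 ≤ N ∧ ∀ y ∈ K, ∀ z, z - y ∈ K → ‖y‖ ≤ N * ‖z‖ := by
  have hnegK : (-K).Nonempty := ⟨0, by simpa using hK.zero_mem⟩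
  -- unit vectors of `K` keep a uniform positive distance from `-K`, because `K ∩ -K = {0}`
  obtain ⟨δ, hδ, hδS⟩ := hK.1.isCompact_unitSphere.exists_forall_le'
    (Metric.continuous_infDist_pt (-K)).continuousOn (a := (0 : ℝ)) fun y ⟨hyK, hy1⟩ => by
      rw [← hK.1.neg.notMem_iff_infDist_pos hnegK]
      intro hy
      rw [hK.eq_zero_of_neg_mem hyK hy, norm_zero] at hy1
      exact zero_ne_one hy1
  refine ⟨max δ⁻¹ 1, le_max_right _ _, fun y hy z hzy => ?_⟩
  rcases eq_or_ne y 0 with rfl | hy0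
  · rw [norm_zero]
    positivity
  have hny : 0 < ‖y‖ := norm_pos_iff.2 hy0
  have hdist : δ ≤ ‖y‖⁻¹ * ‖z‖ := calc
    δ ≤ Metric.infDist (‖y‖⁻¹ • y) (-K) :=
      hδS _ ⟨hK.smul_mem (by positivity) hy, norm_smul_inv_norm hy0⟩
    _ ≤ dist (‖y‖⁻¹ • y) (‖y‖⁻¹ • (y - z)) := Metric.infDist_le_dist_of_mem <| by
      rw [Set.mem_neg, ← smul_neg, neg_sub]
      exact hK.smul_mem (by positivity) hzy
    _ = ‖y‖⁻¹ * ‖z‖ := by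
      rw [dist_eq_norm, ← smul_sub, sub_sub_cancel, norm_smul, norm_inv, norm_norm]
  calc ‖y‖ ≤ δ⁻¹ * ‖z‖ := by
        rw [le_inv_mul_iff₀ hδ, mul_comm, ← le_inv_mul_iff₀ hny]
        exact hdist
    _ ≤ max δ⁻¹ 1 * ‖z‖ := by gcongr; exact le_max_left _ _

theorem exists_smul_sub_mem (hK : IsClosedCone K) {u : X} (hu : u ∈ interior K) :
    ∃ R : ℝ, 0 < R ∧ ∀ x : X, ‖x‖ ≤ 1 → R • u - x ∈ K := by
  obtain ⟨r, hr, hball⟩ := Metric.isOpen_iff.1 isOpen_interior u hu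
  refine ⟨2 / r, by positivity, fun x hx => ?_⟩
  have hmem : u - (r / 2) • x ∈ K := interior_subset <| hball <| by
    rw [Metric.mem_ball, dist_eq_norm, sub_sub_cancel_left, norm_neg, norm_smul,
      Real.norm_of_nonneg (by positivity)]
    nlinarith
  convert hK.smul_mem (by positivity : (0 : ℝ) ≤ 2 / r) hmem using 1
  rw [smul_sub, smul_smul, div_mul_div_comm, mul_comm 2 r, div_self (by positivity), one_smul]

end IsClosedCone

section Homogeneous

variable {f : X → X}

theorem HomogOn.map_zero (hf : HomogOn f K) (h0 : (0 : X) ∈ K) : f 0 = 0 := by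
  have h := hf.2 2 two_pos 0 h0
  rw [smul_zero, two_smul] at h
  exact left_eq_add.1 h

theorem HomogOn.norm_le_mul_norm (hf : HomogOn f K) (hK : IsClosedCone K) {B : ℝ}
    (hB : ∀ x ∈ K, ‖x‖ = 1 → ‖f x‖ ≤ B) (x : X) (hx : x ∈ K) : ‖f x‖ ≤ B * ‖x‖ := by
  rcases eq_or_ne x 0 with rfl | hx0
  · simp [hf.map_zero hK.zero_mem]
  have hnx : 0 < ‖x‖ := norm_pos_iff.2 hx0
  have h := hB _ (hK.smul_mem (inv_nonneg.2 hnx.le) hx) (norm_smul_inv_norm hx0)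
  rwa [hf.2 _ (by positivity) x hx, norm_smul, norm_inv, norm_norm, inv_mul_le_iff₀ hnx,
    mul_comm] at h

end Homogeneous

theorem norm_apply_le_opNormW [FiniteDimensional ℝ X] {f : X → X} (hK : IsClosed K)
    (hf : ContinuousOn f K) {x : X} (hx : x ∈ K) (hx1 : ‖x‖ = 1) : ‖f x‖ ≤ opNormW f K :=
  le_csSup (hK.isCompact_unitSphere.bddAbove_image (hf.mono (Set.sep_subset _ _)).norm)
    ⟨x, ⟨hx, hx1⟩, rfl⟩

def ConeMapOn (f : X → X) (K : Set X) : Prop :=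
  ContinuousOn f K ∧ HomogOn f K ∧ OrderPresOn f K

section ConeMap

variable {f g : X → X}

theorem ConeMapOn.id : ConeMapOn id K :=
  ⟨continuousOn_id, ⟨Set.mapsTo_id K, fun _ _ _ _ => rfl⟩, fun _ _ _ _ h => h⟩

theorem ConeMapOn.comp (hf : ConeMapOn f K) (hg : ConeMapOn g K) : ConeMapOn (f ∘ g) K := by
  obtain ⟨hfc, ⟨hfK, hfs⟩, hfo⟩ := hf
  obtain ⟨hgc, ⟨hgK, hgs⟩, hgo⟩ := hg
  refine ⟨hfc.comp hgc hgK, ⟨hfK.comp hgK, fun c hc x hx => ?_⟩,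
    fun x hx y hy hxy => hfo _ (hgK hx) _ (hgK hy) (hgo x hx y hy hxy)⟩
  rw [Function.comp_apply, hgs c hc x hx, hfs c hc _ (hgK hx), Function.comp_apply]

theorem ConeMapOn.iterate (hf : ConeMapOn f K) : ∀ n : ℕ, ConeMapOn f^[n] K
  | 0 => ConeMapOn.id
  | n + 1 => by
    rw [Function.iterate_succ']
    exact hf.comp (hf.iterate n)

theorem coneMapOn_of_mem_famPow (hA : ∀ f ∈ A, ConeMapOn f K) {m : ℕ} (hg : g ∈ famPow A m) :
    ConeMapOn g K := by
  induction m generalizing g with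
  | zero =>
    obtain rfl : g = id := hg
    exact ConeMapOn.id
  | succ m ih =>
    obtain ⟨f, hf, g', hg', rfl⟩ := hg
    exact (hA f hf).comp (ih hg')

theorem coneMapOn_of_mem_famPlus (hA : ∀ f ∈ A, ConeMapOn f K) (hg : g ∈ famPlus A) :
    ConeMapOn g K := by
  obtain ⟨m, -, hg⟩ := hg
  exact coneMapOn_of_mem_famPow hA hg

theorem OrderPresOn.iterate_sub_pow_smul_mem (hK : IsClosedCone K) (hmono : OrderPresOn f K)
    (hf : HomogOn f K) {u : X} (hu : u ∈ K) {c : ℝ} (hc : 0 < c) (hcu : f u - c • u ∈ K)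
    (n : ℕ) : f^[n] u - c ^ n • u ∈ K := by
  induction n with
  | zero => simpa using hK.zero_mem
  | succ n ih =>
    have hcnu : c ^ n • u ∈ K := hK.smul_mem (pow_nonneg hc.le n) hu
    have hstep : f (f^[n] u) - f (c ^ n • u) ∈ K := hmono _ hcnu _ (hf.1.iterate n hu) ih
    convert hK.add_mem hstep (hK.smul_mem (pow_nonneg hc.le n) hcu) using 1
    rw [Function.iterate_succ_apply', hf.2 (c ^ n) (by positivity) u hu, smul_sub, smul_smul,
      ← pow_succ]
    abel

theorem ConeMapOn.div_le_coneSpecRad [FiniteDimensional ℝ X] (hK : IsClosedCone K)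
    (hf : ConeMapOn f K) {N : ℝ} (hN1 : 1 ≤ N) (hN : ∀ y ∈ K, ∀ z, z - y ∈ K → ‖y‖ ≤ N * ‖z‖)
    {u : X} (hu : u ∈ K) (hu0 : u ≠ 0) {c : ℝ} (hc : 0 < c) (hcu : f u - c • u ∈ K) :
    c / N ≤ coneSpecRad f K := by
  obtain ⟨hfh, hmono⟩ : HomogOn f K ∧ OrderPresOn f K := hf.2
  set v := ‖u‖⁻¹ • u
  have hv : v ∈ K := hK.smul_mem (inv_nonneg.2 (norm_nonneg u)) hu
  have hv1 : ‖v‖ = 1 := norm_smul_inv_norm hu0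
  have hcv : f v - c • v ∈ K := by
    have h := hK.smul_mem (inv_nonneg.2 (norm_nonneg u)) hcu
    rwa [smul_sub, ← hfh.2 _ (inv_pos.2 (norm_pos_iff.2 hu0)) u hu, smul_comm] at h
  refine le_coneSpecRad (by positivity) fun n hn => ?_
  have hlow : ‖c ^ n • v‖ ≤ N * ‖f^[n] v‖ :=
    hN _ (hK.smul_mem (by positivity) hv) _ (hmono.iterate_sub_pow_smul_mem hK hfh hv hc hcv n)
  rw [norm_smul, hv1, mul_one, Real.norm_of_nonneg (by positivity)] at hlow
  calc (c / N) ^ n ≤ c ^ n / N := by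
        rw [div_pow]
        exact div_le_div_of_nonneg_left (by positivity) (by positivity) (le_self_pow₀ hN1 hn.ne')
    _ ≤ ‖f^[n] v‖ := by rwa [div_le_iff₀ (by positivity), mul_comm]
    _ ≤ opNormW (f^[n]) K := norm_apply_le_opNormW hK.1 (hf.iterate n).1 hv hv1

theorem famPow_norm_le (hA : ∀ f ∈ A, ConeMapOn f K) {C : ℝ} (hC0 : 0 ≤ C)
    (hC : ∀ f ∈ A, ∀ x ∈ K, ‖f x‖ ≤ C * ‖x‖) {m : ℕ} (hg : g ∈ famPow A m) (x : X) (hx : x ∈ K) :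
    ‖g x‖ ≤ C ^ m * ‖x‖ := by
  induction m generalizing g with
  | zero =>
    obtain rfl : g = id := hg
    simp
  | succ m ih =>
    obtain ⟨f, hf, g', hg', rfl⟩ := hg
    calc ‖f (g' x)‖ ≤ C * ‖g' x‖ := hC f hf _ ((coneMapOn_of_mem_famPow hA hg').2.1.1 hx)
      _ ≤ C * (C ^ m * ‖x‖) := by gcongr; exact ih hg'
      _ = C ^ (m + 1) * ‖x‖ := by ring

theorem coneSpecRad_rpow_le_genRad (hA : ∀ f ∈ A, ConeMapOn f K) (hbdd : BoundedFamOn A K)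
    {m : ℕ} (hm : 0 < m) (hf : f ∈ famPow A m) : coneSpecRad f K ^ ((m : ℝ)⁻¹) ≤ genRad A K := by
  obtain ⟨C, hC⟩ := hbdd
  set C₀ := max C 0
  have hC₀ : 0 ≤ C₀ := le_max_right _ _
  have hA_le : ∀ f ∈ A, ∀ x ∈ K, ‖f x‖ ≤ C₀ * ‖x‖ := fun f hf x hx =>
    (hC f hf x hx).trans (by gcongr; exact le_max_left _ _)
  have hterm : ∀ n, 0 < n → ∀ g ∈ famPow A n, coneSpecRad g K ^ ((n : ℝ)⁻¹) ≤ C₀ := by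
    intro n hn g hg
    calc coneSpecRad g K ^ ((n : ℝ)⁻¹) ≤ (C₀ ^ n) ^ ((n : ℝ)⁻¹) :=
          Real.rpow_le_rpow (coneSpecRad_nonneg _ _)
            (coneSpecRad_le (by positivity) (famPow_norm_le hA hC₀ hA_le hg)) (by positivity)
      _ = C₀ := Real.pow_rpow_inv_natCast hC₀ hn.ne'
  have hgen : ∀ n : ℕ+, genTerm A K n ≤ C₀ := fun n =>
    Real.sSup_le (by rintro _ ⟨g, hg, rfl⟩; exact hterm n n.pos g hg) hC₀
  calc coneSpecRad f K ^ ((m : ℝ)⁻¹) ≤ genTerm A K m :=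
        le_csSup ⟨C₀, by rintro _ ⟨g, hg, rfl⟩; exact hterm m hm g hg⟩ ⟨f, hf, rfl⟩
    _ ≤ genRad A K :=
        le_ciSup (f := fun n : ℕ+ => genTerm A K n) ⟨C₀, by rintro _ ⟨n, rfl⟩; exact hgen n⟩ ⟨m, hm⟩

theorem one_lt_genRad [FiniteDimensional ℝ X] (hK : IsClosedCone K)
    (hA : ∀ f ∈ A, ConeMapOn f K) (hbdd : BoundedFamOn A K) {h : X → X} (hh : h ∈ famPlus A)
    {u : X} (hu : u ∈ K) (hu0 : u ≠ 0) {c : ℝ} (hc : 1 < c) (hcu : h u - c • u ∈ K) :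
    1 < genRad A K := by
  obtain ⟨k, hk, hh⟩ := hh
  have hhK := coneMapOn_of_mem_famPow hA hh
  obtain ⟨N, hN1, hN⟩ := hK.exists_norm_le_mul_norm
  -- pass to a power `h^[j]` whose growth factor `c ^ j` beats the normality constant
  obtain ⟨j, hj⟩ := pow_unbounded_of_one_lt N hc
  have hj0 : 0 < j := Nat.pos_of_ne_zero fun h0 => by rw [h0, pow_zero] at hj; linarith
  have hr : 1 < coneSpecRad (h^[j]) K :=
    ((one_lt_div (by positivity)).2 hj).trans_le <| (hhK.iterate j).div_le_coneSpecRad hK hN1 hN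
      hu hu0 (by positivity) (hhK.2.2.iterate_sub_pow_smul_mem hK hhK.2.1 hu (by positivity) hcu j)
  calc 1 < coneSpecRad (h^[j]) K ^ (((j * k : ℕ) : ℝ)⁻¹) := Real.one_lt_rpow hr (by positivity)
    _ ≤ genRad A K := coneSpecRad_rpow_le_genRad hA hbdd (Nat.mul_pos hj0 hk) (famPow_iterate hh j)

end ConeMap

theorem IsCompact.exists_pos_sub_smul_mem {S : Set X} (hS : IsCompact S) (hK : IsClosedCone K)
    {F : Set (X → X)} (hF : ∀ f ∈ F, ContinuousOn f S)
    (hcover : ∀ x ∈ S, ∃ f ∈ F, f x ∈ interior K) {u : X} (hu : u ∈ K) :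
    ∃ ε : ℝ, 0 < ε ∧ ∀ x ∈ S, ∃ f ∈ F, f x - ε • u ∈ K := by
  refine hS.induction_on (p := fun T => ∃ ε : ℝ, 0 < ε ∧ ∀ x ∈ T, ∃ f ∈ F, f x - ε • u ∈ K)
    ⟨1, one_pos, by simp⟩ ?_ ?_ ?_
  · rintro s t hst ⟨ε, hε, ht⟩
    exact ⟨ε, hε, fun x hx => ht x (hst hx)⟩
  · rintro s t ⟨ε, hε, hs⟩ ⟨δ, hδ, ht⟩
    refine ⟨min ε δ, lt_min hε hδ, ?_⟩
    rintro x (hx | hx)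
    · obtain ⟨f, hf, hfx⟩ := hs x hx
      exact ⟨f, hf, hK.sub_smul_mem_of_le hu hfx (min_le_left _ _)⟩
    · obtain ⟨f, hf, hfx⟩ := ht x hx
      exact ⟨f, hf, hK.sub_smul_mem_of_le hu hfx (min_le_right _ _)⟩
  · intro x hx
    obtain ⟨f, hf, hfx⟩ := hcover x hx
    have hshift : Tendsto (fun ε : ℝ => f x - ε • u) (𝓝 0) (𝓝 (f x)) := by
      have hc : Continuous fun ε : ℝ => f x - ε • u := by fun_prop
      simpa using hc.tendsto 0
    have hsmall : ∀ᶠ ε in 𝓝[>] (0 : ℝ), f x - ε • u ∈ interior K :=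
      nhdsWithin_le_nhds (hshift (isOpen_interior.mem_nhds hfx))
    obtain ⟨ε, hεx, hε⟩ := (hsmall.and self_mem_nhdsWithin).exists
    have hcont : ContinuousWithinAt (fun y => f y - ε • u) S x :=
      ((hF f hf).sub continuousOn_const).continuousWithinAt hx
    exact ⟨_, hcont (isOpen_interior.mem_nhds hεx), ε, hε,
      fun y hy => ⟨f, hf, interior_subset hy⟩⟩

theorem exists_pos_sub_norm_smul_mem [FiniteDimensional ℝ X] (hK : IsClosedCone K)
    (hA : ∀ f ∈ A, ConeMapOn f K)
    (hprim : ∀ x ∈ K, x ≠ 0 → ∃ f ∈ famPlus A, f x ∈ interior K) {u : X} (hu : u ∈ K) :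
    ∃ ε : ℝ, 0 < ε ∧ ∀ x ∈ K, x ≠ 0 → ∃ f ∈ famPlus A, f x - (ε * ‖x‖) • u ∈ K := by
  obtain ⟨ε, hε, hS⟩ := hK.1.isCompact_unitSphere.exists_pos_sub_smul_mem hK
    (fun f hf => (coneMapOn_of_mem_famPlus hA hf).1.mono (Set.sep_subset _ _))
    (fun x hx => hprim x hx.1 (norm_ne_zero_iff.1 (hx.2 ▸ one_ne_zero))) hu
  refine ⟨ε, hε, fun x hx hx0 => ?_⟩
  have hnx : 0 < ‖x‖ := norm_pos_iff.2 hx0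
  obtain ⟨f, hf, hfx⟩ :=
    hS (‖x‖⁻¹ • x) ⟨hK.smul_mem (inv_nonneg.2 hnx.le) hx, norm_smul_inv_norm hx0⟩
  refine ⟨f, hf, ?_⟩
  rw [(coneMapOn_of_mem_famPlus hA hf).2.1.2 _ (inv_pos.2 hnx) x hx] at hfx
  convert hK.smul_mem hnx.le hfx using 1
  rw [smul_sub, smul_smul, mul_inv_cancel₀ hnx.ne', one_smul, smul_smul, mul_comm]

theorem norm_apply_le_of_genRad_le_one [FiniteDimensional ℝ X] (hK : IsClosedCone K)
    (hA : ∀ f ∈ A, ConeMapOn f K) (hbdd : BoundedFamOn A K) (hr : genRad A K ≤ 1) {u : X}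
    (hu : u ∈ K) {ε : ℝ} (hε : 0 < ε)
    (hεA : ∀ x ∈ K, x ≠ 0 → ∃ f ∈ famPlus A, f x - (ε * ‖x‖) • u ∈ K) {g : X → X}
    (hg : g ∈ famPlus A) : ‖g u‖ ≤ ε⁻¹ := by
  have hgK := coneMapOn_of_mem_famPlus hA hg
  by_contra! hlt
  have hgu0 : g u ≠ 0 := fun h => by
    rw [h, norm_zero] at hlt
    exact (inv_pos.2 hε).not_gt hlt
  have hu0 : u ≠ 0 := by
    rintro rfl
    exact hgu0 (hgK.2.1.map_zero hK.zero_mem)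
  obtain ⟨f, hf, hfg⟩ := hεA (g u) (hgK.2.1.1 hu) hgu0
  exact (one_lt_genRad hK hA hbdd (comp_mem_famPlus hf hg) hu hu0
    ((inv_lt_iff_one_lt_mul₀' hε).1 hlt) hfg).not_ge hr

end

theorem statement12 {X : Type*} [NormedAddCommGroup X] [NormedSpace ℝ X]
    [FiniteDimensional ℝ X]
    (K : Set X) (hK : IsClosedCone K) (hint : (interior K).Nonempty)
    (A : Set (X → X))
    (hA : ∀ f ∈ A, ContinuousOn f K ∧ HomogOn f K ∧ OrderPresOn f K)
    (hbdd : BoundedFamOn A K)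
    (hprim : ∀ x ∈ K, x ≠ 0 → ∃ m : ℕ, 0 < m ∧ ∃ f ∈ famPow A m, f x ∈ interior K)
    (hr : genRad A K = 1) :
    ∃ C : ℝ, ∀ m : ℕ, 0 < m → ∀ f ∈ famPow A m, ∀ x ∈ K, ‖f x‖ ≤ C * ‖x‖ := by
  obtain ⟨u, hu⟩ := hint
  have huK : u ∈ K := interior_subset hu
  have hprim' : ∀ x ∈ K, x ≠ 0 → ∃ f ∈ famPlus A, f x ∈ interior K := fun x hx hx0 =>
    let ⟨m, hm, f, hf, hfx⟩ := hprim x hx hx0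
    ⟨f, ⟨m, hm, hf⟩, hfx⟩
  obtain ⟨ε, hε, hεA⟩ := exists_pos_sub_norm_smul_mem hK hA hprim' huK
  obtain ⟨N, hN1, hN⟩ := hK.exists_norm_le_mul_norm
  obtain ⟨R, hR, hRu⟩ := hK.exists_smul_sub_mem hu
  refine ⟨N * R * ε⁻¹, fun m hm g hg => ?_⟩
  have hgu : ‖g u‖ ≤ ε⁻¹ := norm_apply_le_of_genRad_le_one hK hA hbdd hr.le huK hε hεA ⟨m, hm, hg⟩
  obtain ⟨-, hgh, hgmono⟩ := coneMapOn_of_mem_famPow hA hg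
  refine hgh.norm_le_mul_norm hK fun x hx hx1 => ?_
  calc ‖g x‖ ≤ N * ‖g (R • u)‖ :=
        hN _ (hgh.1 hx) _ (hgmono x hx _ (hK.smul_mem hR.le huK) (hRu x hx1.le))
    _ = N * R * ‖g u‖ := by
        rw [hgh.2 R hR u huK, norm_smul, Real.norm_of_nonneg hR.le, mul_assoc]
    _ ≤ N * R * ε⁻¹ := by gcongr
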